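/- Let e be a restitution coefficient in class 𝒞₀ (absolutely continuous non-increasing e : ℝ₊ → (0,1], r e(r) strictly increasing, e(0)=1). Define Π_e : ℝ³ → ℝ³ by Π_e(w) = β_e(|w|) w where β_e(r) = (1+e(r))/2. Then for any δ > 0, Π_e is a diffeomorphism from the cone Ω_δ onto itself, its inverse is π_e(z) = (α_e(|z|)/|z|) z where α_e is the inverse of r ↦ r β_e(r), and its Jacobian determinant equals 𝒥_e(|z|) = (1/2)(1 + ϑ_e'(α_e(|z|))) β_e²(α_e(|z|)). -/

import Mathlib

/-!
`Π_e` rescales each vector by the positive factor `β_e(|w|)`, so it preserves directions and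
hence the cone; along each ray it acts as `η_e(r) = r β_e(r)`, which is continuous, vanishes at
`0` and grows at least like `r / 2`, hence is onto `(0, ∞)`, so `π_e` is a two-sided inverse.
The derivative of a radial map `w ↦ g(|w|) w` is `g(|w|) I + g'(|w|) |w|⁻¹ w ⊗ w`, whose
determinant is `g² (g + |w| g')` by the matrix determinant lemma; for `g = β_e` this is
`β_e² (1 + ϑ_e') / 2`.
-/

open Real Set MeasureTheory RealInnerProductSpace

abbrev E3 := EuclideanSpace ℝ (Fin 3)

/-- The cone `Ω_δ(σ) = {u ≠ 0 : û·σ > δ - 1}`. -/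
def cone (σ : E3) (δ : ℝ) : Set E3 :=
  {u : E3 | u ≠ 0 ∧ ⟪u, σ⟫ / ‖u‖ > δ - 1}

/-- The map `Π_e(w) = β_e(|w|) w` with `β_e(r) = (1+e(r))/2`. -/
noncomputable def PiMap (e : ℝ → ℝ) (w : E3) : E3 := ((1 + e ‖w‖) / 2) • w

/-- Its inverse `π_e(z) = (α_e(|z|)/|z|) z`. -/
noncomputable def piInv (αe : ℝ → ℝ) (z : E3) : E3 := (αe ‖z‖ / ‖z‖) • z

theorem LinearMap.det_id_add_smulRight {R M : Type*} [CommRing R] [AddCommGroup M] [Module R M]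
    [Module.Free R M] [Module.Finite R M] (f : M →ₗ[R] R) (v : M) :
    LinearMap.det (LinearMap.id + f.smulRight v) = 1 + f v := by
  let b := Module.Free.chooseBasis R M
  have hrank : toMatrix b b (f.smulRight v)
      = Matrix.replicateCol (Fin 1) (b.repr v) * Matrix.replicateRow (Fin 1) (fun j => f (b j)) := by
    ext i j
    simp [LinearMap.toMatrix_apply, Matrix.mul_apply, mul_comm]
  rw [← LinearMap.det_toMatrix b, map_add, LinearMap.toMatrix_id, hrank]
  refine (Matrix.det_one_add_replicateCol_mul_replicateRow _ _).trans ?_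
  congr 1
  conv_rhs => rw [← b.sum_repr v, map_sum]
  simp only [dotProduct, map_smul, smul_eq_mul, mul_comm]

theorem LinearMap.det_smul_id_add_smulRight {K V : Type*} [Field K] [AddCommGroup V] [Module K V]
    [FiniteDimensional K V] {c : K} (hc : c ≠ 0) (f : V →ₗ[K] K) (v : V) :
    LinearMap.det (c • LinearMap.id + f.smulRight v) = c ^ Module.finrank K V * (1 + f v / c) := by
  have : c • LinearMap.id + f.smulRight v = c • (LinearMap.id + (c⁻¹ • f).smulRight v) := by
    ext x; simp [smul_smul, hc]
  rw [this, LinearMap.det_smul, LinearMap.det_id_add_smulRight]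
  simp [div_eq_inv_mul]

theorem ContinuousLinearMap.det_smul_id_add_smulRight {𝕜 V : Type*} [NontriviallyNormedField 𝕜]
    [NormedAddCommGroup V] [NormedSpace 𝕜 V] [FiniteDimensional 𝕜 V] {c : 𝕜} (hc : c ≠ 0)
    (f : V →L[𝕜] 𝕜) (v : V) :
    (c • ContinuousLinearMap.id 𝕜 V + f.smulRight v).det
      = c ^ Module.finrank 𝕜 V * (1 + f v / c) :=
  LinearMap.det_smul_id_add_smulRight hc (f : V →ₗ[𝕜] 𝕜) v

section InnerProductSpace

variable {F : Type*} [NormedAddCommGroup F] [InnerProductSpace ℝ F]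

theorem hasFDerivAt_norm {x : F} (hx : x ≠ 0) :
    HasFDerivAt (‖·‖) (‖x‖⁻¹ • innerSL ℝ x) x := by
  have h := (hasStrictFDerivAt_norm_sq x).hasFDerivAt.sqrt (pow_ne_zero 2 (norm_ne_zero_iff.2 hx))
  simp only [Real.sqrt_sq (norm_nonneg _)] at h
  convert h using 1
  ext v
  simp only [smul_apply, coe_innerSL_apply, smul_eq_mul, nsmul_eq_mul, Nat.cast_ofNat]
  field_simp

theorem hasFDerivAt_comp_norm_smul {g : ℝ → ℝ} {g' : ℝ} {x : F} (hx : x ≠ 0)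
    (hg : HasDerivAt g g' ‖x‖) :
    HasFDerivAt (fun w => g ‖w‖ • w)
      (g ‖x‖ • ContinuousLinearMap.id ℝ F + ((g' / ‖x‖) • innerSL ℝ x).smulRight x) x := by
  refine ((hg.comp_hasFDerivAt x (hasFDerivAt_norm hx)).smul (hasFDerivAt_id x)).congr_fderiv ?_
  simp only [Function.comp_apply, id, smul_smul, div_eq_mul_inv]

end InnerProductSpace

theorem HasDerivAt.of_mul_id {f : ℝ → ℝ} {t r : ℝ} (hr : r ≠ 0)
    (h : HasDerivAt (fun s => s * f s) t r) :
    HasDerivAt f ((t - f r) / r) r := by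
  have hquot := h.div (hasDerivAt_id r) hr
  refine (hquot.congr_of_eventuallyEq ?_).congr_deriv ?_
  · filter_upwards [eventually_ne_nhds hr] with s hs
    simp [hs]
  · simp only [id]; field_simp

open Filter in
theorem exists_pos_mul_one_add_div_two_eq {e : ℝ → ℝ} (hcont : ContinuousOn e (Ici 0))
    (hnonneg : ∀ r ≥ (0 : ℝ), 0 ≤ e r) {s : ℝ} (hs : 0 < s) :
    ∃ r > 0, r * ((1 + e r) / 2) = s := by
  have hη : ContinuousOn (fun r => r * ((1 + e r) / 2)) (Ici 0) :=
    continuousOn_id.mul ((continuousOn_const.add hcont).div_const 2)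
  have htop : Tendsto (fun r => r * ((1 + e r) / 2)) atTop atTop := by
    refine tendsto_atTop_mono' _ ?_ (tendsto_id.atTop_div_const two_pos)
    filter_upwards [eventually_ge_atTop 0] with r hr
    dsimp only [id]
    nlinarith [hnonneg r hr]
  obtain ⟨r, hr, hrs⟩ := intermediate_value_Ici hη htop (show s ∈ Ici _ by simpa using hs.le)
  refine ⟨r, (mem_Ici.1 hr).lt_of_ne ?_, hrs⟩
  rintro rfl
  simp [hs.ne] at hrs

theorem smul_mem_cone {σ : E3} {δ t : ℝ} (ht : 0 < t) {u : E3} (hu : u ∈ cone σ δ) :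
    t • u ∈ cone σ δ := by
  refine ⟨smul_ne_zero ht.ne' hu.1, ?_⟩
  rw [real_inner_smul_left, norm_smul, Real.norm_of_nonneg ht.le, mul_div_mul_left _ _ ht.ne']
  exact hu.2

section PiMap

variable {e αe : ℝ → ℝ}

theorem norm_piMap {w : E3} (he : -1 ≤ e ‖w‖) : ‖PiMap e w‖ = ‖w‖ * ((1 + e ‖w‖) / 2) := by
  rw [PiMap, norm_smul, Real.norm_of_nonneg (by linarith), mul_comm]

theorem piMap_mem_cone {σ : E3} {δ : ℝ} {w : E3} (he : -1 < e ‖w‖) (hw : w ∈ cone σ δ) :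
    PiMap e w ∈ cone σ δ :=
  smul_mem_cone (by linarith) hw

theorem piInv_mem_cone {σ : E3} {δ : ℝ} {z : E3} (hα : 0 < αe ‖z‖) (hz : z ∈ cone σ δ) :
    piInv αe z ∈ cone σ δ :=
  smul_mem_cone (div_pos hα (norm_pos_iff.2 hz.1)) hz

theorem piInv_piMap {w : E3} (hw : w ≠ 0) (he : -1 < e ‖w‖)
    (hα : αe (‖w‖ * ((1 + e ‖w‖) / 2)) = ‖w‖) : piInv αe (PiMap e w) = w := by
  have hr : 0 < ‖w‖ := norm_pos_iff.2 hw
  have hβ : 1 + e ‖w‖ ≠ 0 := by linarith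
  have hcancel : ‖w‖ / (‖w‖ * ((1 + e ‖w‖) / 2)) * ((1 + e ‖w‖) / 2) = 1 := by field_simp
  rw [piInv, norm_piMap he.le, hα, PiMap, smul_smul, hcancel, one_smul]

theorem piMap_piInv {z : E3} (hz : z ≠ 0) (hα : 0 ≤ αe ‖z‖)
    (hη : αe ‖z‖ * ((1 + e (αe ‖z‖)) / 2) = ‖z‖) : PiMap e (piInv αe z) = z := by
  have hr : 0 < ‖z‖ := norm_pos_iff.2 hz
  have hnorm : ‖piInv αe z‖ = αe ‖z‖ := by
    rw [piInv, norm_smul, Real.norm_of_nonneg (div_nonneg hα hr.le), div_mul_cancel₀ _ hr.ne']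
  rw [PiMap, hnorm, piInv, smul_smul, mul_div, mul_comm, hη, div_self hr.ne', one_smul]

theorem hasFDerivAt_piMap {w : E3} (hw : w ≠ 0)
    (hd : DifferentiableAt ℝ (fun s => s * e s) ‖w‖) :
    HasFDerivAt (PiMap e)
      (((1 + e ‖w‖) / 2) • ContinuousLinearMap.id ℝ E3 +
        (((deriv (fun s => s * e s) ‖w‖ - e ‖w‖) / ‖w‖ / 2 / ‖w‖) • innerSL ℝ w).smulRight w) w :=
  hasFDerivAt_comp_norm_smul hw
    (((hd.hasDerivAt.of_mul_id (norm_ne_zero_iff.2 hw)).const_add 1).div_const 2)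

theorem det_fderiv_piMap {w : E3} (hw : w ≠ 0) (he : e ‖w‖ ≠ -1)
    (hd : DifferentiableAt ℝ (fun s => s * e s) ‖w‖) :
    (fderiv ℝ (PiMap e) w).det
      = 1 / 2 * (1 + deriv (fun s => s * e s) ‖w‖) * ((1 + e ‖w‖) / 2) ^ 2 := by
  have hβ : 1 + e ‖w‖ ≠ 0 := fun h => he (by linarith)
  have hr : ‖w‖ ≠ 0 := norm_ne_zero_iff.2 hw
  rw [(hasFDerivAt_piMap hw hd).fderiv,
    ContinuousLinearMap.det_smul_id_add_smulRight (div_ne_zero hβ two_ne_zero),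
    finrank_euclideanSpace_fin]
  simp only [smul_apply, coe_innerSL_apply, real_inner_self_eq_norm_sq, smul_eq_mul]
  field_simp
  ring

end PiMap

theorem stmt5_general (e αe : ℝ → ℝ)
    (hrange : ∀ r ≥ (0 : ℝ), 0 < e r ∧ e r ≤ 1)
    (hcont : ContinuousOn e (Set.Ici 0))
    (hdiff : ∀ r > (0 : ℝ), DifferentiableAt ℝ (fun s => s * e s) r)
    (hinv : ∀ r ≥ (0 : ℝ),
      αe (r * ((1 + e r) / 2)) = r ∧ αe r * ((1 + e (αe r)) / 2) = r)
    (σ : E3) (δ : ℝ) :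
    Set.BijOn (PiMap e) (cone σ δ) (cone σ δ) ∧
    DifferentiableOn ℝ (PiMap e) (cone σ δ) ∧
    (∀ w ∈ cone σ δ, piInv αe (PiMap e w) = w) ∧
    (∀ z ∈ cone σ δ, PiMap e (piInv αe z) = z) ∧
    (∀ w ∈ cone σ δ,
      (fderiv ℝ (PiMap e) w).det
        = 1 / 2 * (1 + deriv (fun s => s * e s) (αe ‖PiMap e w‖))
            * ((1 + e (αe ‖PiMap e w‖)) / 2) ^ 2) := by
  have he : ∀ w : E3, -1 < e ‖w‖ := fun w => by linarith [(hrange ‖w‖ (norm_nonneg w)).1]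
  have hαpos : ∀ z : E3, z ≠ 0 → 0 < αe ‖z‖ := by
    intro z hz
    obtain ⟨r, hr, hrz⟩ := exists_pos_mul_one_add_div_two_eq hcont
      (fun r hr => (hrange r hr).1.le) (norm_pos_iff.2 hz)
    rwa [← hrz, (hinv r hr.le).1]
  have hleft : ∀ w ∈ cone σ δ, piInv αe (PiMap e w) = w := fun w hw =>
    piInv_piMap hw.1 (he w) (hinv ‖w‖ (norm_nonneg w)).1
  have hright : ∀ z ∈ cone σ δ, PiMap e (piInv αe z) = z := fun z hz =>
    piMap_piInv hz.1 (hαpos z hz.1).le (hinv ‖z‖ (norm_nonneg z)).2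
  refine ⟨⟨fun w hw => piMap_mem_cone (he w) hw, ?_, ?_⟩, ?_, hleft, hright, ?_⟩
  · exact Set.LeftInvOn.injOn hleft
  · exact fun z hz => ⟨piInv αe z, piInv_mem_cone (hαpos z hz.1) hz, hright z hz⟩
  · exact fun w hw => (hasFDerivAt_piMap hw.1
      (hdiff _ (norm_pos_iff.2 hw.1))).differentiableAt.differentiableWithinAt
  · intro w hw
    rw [norm_piMap (he w).le, (hinv ‖w‖ (norm_nonneg w)).1]
    exact det_fderiv_piMap hw.1 (he w).ne' (hdiff _ (norm_pos_iff.2 hw.1))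

theorem stmt5 (e αe : ℝ → ℝ)
    (h0 : e 0 = 1)
    (hrange : ∀ r ≥ (0 : ℝ), 0 < e r ∧ e r ≤ 1)
    (hcont : ContinuousOn e (Set.Ici 0))
    (hmono : AntitoneOn e (Set.Ici 0))
    (hθ : StrictMonoOn (fun r => r * e r) (Set.Ici 0))
    (hdiff : ∀ r > (0 : ℝ), DifferentiableAt ℝ (fun s => s * e s) r)
    (hinv : ∀ r ≥ (0 : ℝ),
      αe (r * ((1 + e r) / 2)) = r ∧ αe r * ((1 + e (αe r)) / 2) = r)
    (σ : E3) (hσ : ‖σ‖ = 1) (δ : ℝ) (hδ : 0 < δ) :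
    Set.BijOn (PiMap e) (cone σ δ) (cone σ δ) ∧
    DifferentiableOn ℝ (PiMap e) (cone σ δ) ∧
    (∀ w ∈ cone σ δ, piInv αe (PiMap e w) = w) ∧
    (∀ z ∈ cone σ δ, PiMap e (piInv αe z) = z) ∧
    (∀ w ∈ cone σ δ,
      (fderiv ℝ (PiMap e) w).det
        = 1 / 2 * (1 + deriv (fun s => s * e s) (αe ‖PiMap e w‖))
            * ((1 + e (αe ‖PiMap e w‖)) / 2) ^ 2) :=
  stmt5_general e αe hrange hcont hdiff hinv σ δ
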